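/- Let ℏ > 0, let X and Y be real symmetric n×n matrices with Y positive definite, set M = X + iY, and define the generalized Gaussian φ_M^ℏ(x) = (det Y / (πℏ)ⁿ)^{1/4} exp(i M x·x / 2ℏ). Define the operator U on L²(ℝⁿ) by Uψ(x) = (det Y)^{1/4} exp(i X x·x / 2ℏ) ψ(Y^{1/2} x), where Y^{1/2} is the positive square root of Y. Then: (i) U is unitary on L²(ℝⁿ); (ii) U φ₀^ℏ = φ_M^ℏ, where φ₀^ℏ(x) = (πℏ)^{−n/4} exp(−|x|²/2ℏ); and (iii) U satisfies the symplectic covariance relation U ∘ T^ℏ(z) = T^ℏ(Sz) ∘ U for all z ∈ ℝ^{2n}, where S is the symplectic matrix with block form S(x,p) = (Y^{−1/2} x, X Y^{−1/2} x + Y^{1/2} p), i.e. S = [[Y^{−1/2}, 0],[X Y^{−1/2}, Y^{1/2}]] ∈ Sp(n). -/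

import Mathlib

open MeasureTheory Matrix Complex
open scoped RealInnerProductSpace ENNReal

noncomputable section

abbrev E (n : ℕ) : Type := EuclideanSpace ℝ (Fin n)

def toE (n : ℕ) (v : Fin n → ℝ) : E n := WithLp.toLp 2 v
def fromE (n : ℕ) (v : E n) : Fin n → ℝ := WithLp.ofLp v

/-- The Heisenberg–Weyl operator `T^ℏ(z₀)`:
`T^ℏ(z₀)ψ(x) = exp(i(p₀·x − p₀·x₀/2)/ℏ) ψ(x − x₀)`. -/
def HW (n : ℕ) (hb : ℝ) (z₀ : E n × E n) (ψ : E n → ℂ) : E n → ℂ :=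
  fun x => Complex.exp (Complex.I * (((⟪z₀.2, x⟫ - ⟪z₀.2, z₀.1⟫ / 2) / hb : ℝ) : ℂ)) *
    ψ (x - z₀.1)

/-- The frame sum `∑_{z ∈ Λ} |⟨ψ, T^ℏ(z)φ⟩|²`, valued in `ℝ≥0∞`. -/
def gaborSum (n : ℕ) (hb : ℝ) (φ : E n → ℂ) (Λ : Set (E n × E n)) (ψ : E n → ℂ) : ℝ≥0∞ :=
  ∑' z : Λ, ENNReal.ofReal (‖∫ x, ψ x * (starRingEnd ℂ) (HW n hb (z : E n × E n) φ x)‖ ^ 2)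

/-- The Gabor system `G(φ,Λ)` is an `ℏ`-frame with bounds `a`, `b`:
`a‖ψ‖² ≤ ∑_{z∈Λ} |⟨ψ, T^ℏ(z)φ⟩|² ≤ b‖ψ‖²` for every `ψ ∈ L²(ℝⁿ)`. -/
def IsGaborFrame (n : ℕ) (hb : ℝ) (φ : E n → ℂ) (Λ : Set (E n × E n)) (a b : ℝ) : Prop :=
  ∀ ψ : E n → ℂ, MemLp ψ 2 volume →
    (ENNReal.ofReal (a * ∫ x, ‖ψ x‖ ^ 2) ≤ gaborSum n hb φ Λ ψ ∧
      gaborSum n hb φ Λ ψ ≤ ENNReal.ofReal (b * ∫ x, ‖ψ x‖ ^ 2))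

/-- The standard symplectic form `σ(z,z′) = p·x′ − p′·x`. -/
def sform (n : ℕ) (z w : E n × E n) : ℝ := ⟪z.2, w.1⟫ - ⟪w.2, z.1⟫

/-- The standard centered Gaussian `φ₀^ℏ(x) = (πℏ)^{−n/4} exp(−|x|²/2ℏ)`. -/
def gauss0 (n : ℕ) (hb : ℝ) : E n → ℂ :=
  fun x => ((((Real.pi * hb) ^ (-(n : ℝ) / 4) * Real.exp (-‖x‖ ^ 2 / (2 * hb))) : ℝ) : ℂ)

/-- The generalized Gaussian `φ_M^ℏ(x) = (det Y / (πℏ)ⁿ)^{1/4} exp(i M x·x / 2ℏ)`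
with `M = X + iY`. -/
def gaussM (n : ℕ) (hb : ℝ) (X Y : Matrix (Fin n) (Fin n) ℝ) : E n → ℂ :=
  fun x => (((Y.det / (Real.pi * hb) ^ n) ^ ((1 : ℝ) / 4) : ℝ) : ℂ) *
    Complex.exp (Complex.I *
      (((X.map ((↑) : ℝ → ℂ) + Complex.I • Y.map ((↑) : ℝ → ℂ)) *ᵥ
          (fun i => (x i : ℂ))) ⬝ᵥ (fun i => (x i : ℂ))) / (2 * (hb : ℂ)))

/-- The operator `Uψ(x) = (det Y)^{1/4} exp(i X x·x / 2ℏ) ψ(Y^{1/2} x)`, where the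
square root `Y^{1/2}` is given by `R`. -/
def UXY (n : ℕ) (hb : ℝ) (X R : Matrix (Fin n) (Fin n) ℝ) (Y : Matrix (Fin n) (Fin n) ℝ)
    (ψ : E n → ℂ) : E n → ℂ :=
  fun x => ((Y.det ^ ((1 : ℝ) / 4) : ℝ) : ℂ) *
    Complex.exp (Complex.I * (((X *ᵥ fromE n x) ⬝ᵥ fromE n x / (2 * hb) : ℝ) : ℂ)) *
    ψ (toE n (R *ᵥ fromE n x))

/-- The symplectic matrix `S = [[Y^{−1/2}, 0],[X Y^{−1/2}, Y^{1/2}]]`, as a map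
`S(x,p) = (Y^{−1/2}x, X Y^{−1/2}x + Y^{1/2}p)`, where `R = Y^{1/2}`. -/
def SXY (n : ℕ) (X R : Matrix (Fin n) (Fin n) ℝ) (z : E n × E n) : E n × E n :=
  (toE n (R⁻¹ *ᵥ fromE n z.1),
    toE n (X *ᵥ (R⁻¹ *ᵥ fromE n z.1) + R *ᵥ fromE n z.2))

/-!
`U` is a unimodular chirp `e^{iXx·x/2ℏ}` times the dilation `ψ ↦ (det Y)^{1/4} ψ(Rx)`. Since
`det Y = (det R)²`, the factor `(det Y)^{1/4}` exactly compensates the Jacobian `|det R|` of the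
substitution `y = Rx`, so `U` is an isometry, and a chirp-dilation of the same shape built from
`R⁻¹` inverts it. For symmetric `R` with `R² = Y` one has `|Rx|² = Yx·x`, which turns `U φ₀` into
`φ_M`. Covariance reduces to expanding the quadratic phase `X(x - u)·(x - u)` with `u = R⁻¹x₀`.
-/

lemma div_pow_rpow {a b : ℝ} (ha : 0 ≤ a) (hb : 0 < b) (n : ℕ) (r : ℝ) :
    (a / b ^ n) ^ r = a ^ r * b ^ (-(n * r)) := by
  rw [Real.div_rpow ha (by positivity), ← Real.rpow_natCast, ← Real.rpow_mul hb.le,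
    Real.rpow_neg hb.le, div_eq_mul_inv]

lemma sq_rpow_one_div_four_sq (r : ℝ) : ((r ^ 2) ^ ((1 : ℝ) / 4)) ^ 2 = |r| := by
  rw [← Real.rpow_natCast, ← Real.rpow_mul (sq_nonneg r), ← Real.sqrt_sq_eq_abs,
    Real.sqrt_eq_rpow]
  norm_num

lemma mul_exp_I_mul_eq_of_add_eq {p q r s : ℝ} (h : p + q = r + s) (c Ψ : ℂ) :
    c * Complex.exp (Complex.I * p) * (Complex.exp (Complex.I * q) * Ψ) =
      Complex.exp (Complex.I * r) * (c * Complex.exp (Complex.I * s) * Ψ) := by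
  have h' : Complex.I * p + Complex.I * q = Complex.I * r + Complex.I * s := by
    rw [← mul_add, ← mul_add, ← Complex.ofReal_add, ← Complex.ofReal_add, h]
  calc _ = c * Complex.exp (Complex.I * p + Complex.I * q) * Ψ := by rw [Complex.exp_add]; ring
    _ = _ := by rw [h', Complex.exp_add]; ring

section Matrix

variable {ι : Type*} [Fintype ι]

lemma mulVec_dotProduct_comm {A : Matrix ι ι ℝ} (hA : Aᵀ = A) (v w : ι → ℝ) :
    (A *ᵥ v) ⬝ᵥ w = (A *ᵥ w) ⬝ᵥ v := by
  rw [dotProduct_comm, dotProduct_mulVec, ← mulVec_transpose, hA]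

lemma mulVec_nonsing_inv_mulVec [DecidableEq ι] {A : Matrix ι ι ℝ} (hA : IsUnit A.det)
    (v : ι → ℝ) : A *ᵥ (A⁻¹ *ᵥ v) = v := by
  rw [mulVec_mulVec, mul_nonsing_inv _ hA, one_mulVec]

lemma map_ofReal_mulVec_dotProduct (A : Matrix ι ι ℝ) (v : ι → ℝ) :
    (A.map ((↑) : ℝ → ℂ) *ᵥ (fun i => (v i : ℂ))) ⬝ᵥ (fun i => (v i : ℂ)) =
      (((A *ᵥ v) ⬝ᵥ v : ℝ) : ℂ) := by
  simp only [dotProduct, mulVec, Matrix.map_apply]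
  push_cast
  rfl

end Matrix

namespace MeasureTheory.Measure

variable {F G : Type*} [NormedAddCommGroup F] [NormedSpace ℝ F] [MeasurableSpace F] [BorelSpace F]
  [FiniteDimensional ℝ F] (μ : Measure F) [IsAddHaarMeasure μ] [NormedAddCommGroup G]

theorem integral_comp_linearMap [NormedSpace ℝ G] {f : F →ₗ[ℝ] F} (hf : LinearMap.det f ≠ 0)
    (g : F → G) : ∫ x, g (f x) ∂μ = |(LinearMap.det f)⁻¹| • ∫ y, g y ∂μ := by
  let e := (f.equivOfDetNeZero hf).toContinuousLinearEquiv.toHomeomorph.toMeasurableEquiv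
  have he : Measure.map e μ = ENNReal.ofReal |(LinearMap.det f)⁻¹| • μ :=
    map_linearMap_addHaar_eq_smul_addHaar μ hf
  have h := integral_map_equiv (μ := μ) e g
  rw [he, integral_smul_measure, ENNReal.toReal_ofReal (abs_nonneg _)] at h
  exact h.symm

theorem memLp_comp_linearMap {f : F →ₗ[ℝ] F} (hf : LinearMap.det f ≠ 0) {p : ℝ≥0∞} {g : F → G}
    (hg : MemLp g p μ) : MemLp (fun x => g (f x)) p μ := by
  let e := (f.equivOfDetNeZero hf).toContinuousLinearEquiv.toHomeomorph.toMeasurableEquiv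
  have he : Measure.map e μ = ENNReal.ofReal |(LinearMap.det f)⁻¹| • μ :=
    map_linearMap_addHaar_eq_smul_addHaar μ hf
  refine e.memLp_map_measure_iff.1 ?_
  rw [he]
  exact hg.smul_measure ENNReal.ofReal_ne_top

end MeasureTheory.Measure

variable {n : ℕ}

@[simp] lemma fromE_toE (v : Fin n → ℝ) : fromE n (toE n v) = v := rfl

@[simp] lemma toE_fromE (v : E n) : toE n (fromE n v) = v := rfl

lemma inner_eq_dotProduct (v w : E n) : ⟪v, w⟫ = fromE n v ⬝ᵥ fromE n w := by
  simp [EuclideanSpace.inner_eq_star_dotProduct, fromE, dotProduct_comm]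

lemma norm_toE_mulVec_sq (A : Matrix (Fin n) (Fin n) ℝ) (v : Fin n → ℝ) :
    ‖toE n (A *ᵥ v)‖ ^ 2 = ((Aᵀ * A) *ᵥ v) ⬝ᵥ v := by
  rw [← real_inner_self_eq_norm_sq, inner_eq_dotProduct, fromE_toE, ← mulVec_mulVec,
    mulVec_transpose, ← dotProduct_mulVec]

lemma det_toLpLin (A : Matrix (Fin n) (Fin n) ℝ) : LinearMap.det (toLpLin 2 2 A) = A.det := by
  rw [toLpLin_eq_toLin, LinearMap.det_toLin]

lemma integral_comp_mulVec {A : Matrix (Fin n) (Fin n) ℝ} (hA : A.det ≠ 0) (g : E n → ℝ) :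
    ∫ x, g (toE n (A *ᵥ fromE n x)) = |A.det|⁻¹ * ∫ x, g x := by
  have h := Measure.integral_comp_linearMap volume (f := toLpLin 2 2 A) (by rwa [det_toLpLin]) g
  rwa [det_toLpLin, abs_inv] at h

lemma memLp_comp_mulVec {A : Matrix (Fin n) (Fin n) ℝ} (hA : A.det ≠ 0) {p : ℝ≥0∞}
    {ψ : E n → ℂ} (hψ : MemLp ψ p volume) : MemLp (fun x => ψ (toE n (A *ᵥ fromE n x))) p volume :=
  Measure.memLp_comp_linearMap volume (f := toLpLin 2 2 A) (by rwa [det_toLpLin]) hψ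

def chirpDilation (c : ℝ) (θ : E n → ℝ) (A : Matrix (Fin n) (Fin n) ℝ) (ψ : E n → ℂ) :
    E n → ℂ :=
  fun x => (c : ℂ) * Complex.exp (Complex.I * (θ x : ℂ)) * ψ (toE n (A *ᵥ fromE n x))

lemma UXY_eq_chirpDilation (hb : ℝ) (X R Y : Matrix (Fin n) (Fin n) ℝ) :
    UXY n hb X R Y =
      chirpDilation (Y.det ^ ((1 : ℝ) / 4)) (fun x => (X *ᵥ fromE n x) ⬝ᵥ fromE n x / (2 * hb)) R :=
  rfl

section chirpDilation

variable {c : ℝ} {θ : E n → ℝ} {A : Matrix (Fin n) (Fin n) ℝ}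

lemma norm_chirpDilation_apply (ψ : E n → ℂ) (x : E n) :
    ‖chirpDilation c θ A ψ x‖ = |c| * ‖ψ (toE n (A *ᵥ fromE n x))‖ := by
  simp [chirpDilation, Complex.norm_exp]

lemma memLp_chirpDilation (hθ : Measurable θ) (hA : A.det ≠ 0) {p : ℝ≥0∞} {ψ : E n → ℂ}
    (hψ : MemLp ψ p volume) : MemLp (chirpDilation c θ A ψ) p volume := by
  have hcomp := memLp_comp_mulVec hA hψ
  have hphase : Measurable fun x => (c : ℂ) * Complex.exp (Complex.I * (θ x : ℂ)) := by
    fun_prop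
  refine ⟨hphase.aestronglyMeasurable.mul hcomp.1, ?_⟩
  rw [eLpNorm_congr_norm_ae (g := fun x => (c : ℂ) * ψ (toE n (A *ᵥ fromE n x)))
    (Filter.Eventually.of_forall fun x => by simp [norm_chirpDilation_apply])]
  exact (hcomp.const_mul _).2

lemma integral_norm_sq_chirpDilation (hA : A.det ≠ 0) (ψ : E n → ℂ) :
    ∫ x, ‖chirpDilation c θ A ψ x‖ ^ 2 = c ^ 2 * |A.det|⁻¹ * ∫ x, ‖ψ x‖ ^ 2 := by
  simp_rw [norm_chirpDilation_apply, mul_pow, sq_abs]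
  rw [integral_const_mul, integral_comp_mulVec hA (fun y => ‖ψ y‖ ^ 2), mul_assoc]

lemma chirpDilation_chirpDilation_inv (hc : c ≠ 0) (hA : IsUnit A.det) (ψ : E n → ℂ) :
    chirpDilation c θ A
      (chirpDilation c⁻¹ (fun y => -θ (toE n (A⁻¹ *ᵥ fromE n y))) A⁻¹ ψ) = ψ := by
  funext x
  simp only [chirpDilation, fromE_toE, mulVec_mulVec, nonsing_inv_mul _ hA, one_mulVec, toE_fromE]
  rw [← mul_assoc, mul_mul_mul_comm, ← Complex.ofReal_mul, mul_inv_cancel₀ hc, ← Complex.exp_add]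
  simp

end chirpDilation

section UXY

variable {hb : ℝ} {X Y R : Matrix (Fin n) (Fin n) ℝ}

lemma memLp_UXY (hR : R.det ≠ 0) {p : ℝ≥0∞} {ψ : E n → ℂ} (hψ : MemLp ψ p volume) :
    MemLp (UXY n hb X R Y ψ) p volume := by
  have hθ : Continuous fun x : E n => (X *ᵥ fromE n x) ⬝ᵥ fromE n x / (2 * hb) := by
    simp only [dotProduct, mulVec, fromE]
    fun_prop
  exact memLp_chirpDilation hθ.measurable hR hψ

lemma integral_norm_sq_UXY (hRR : R * R = Y) (hR : R.det ≠ 0) (ψ : E n → ℂ) :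
    ∫ x, ‖UXY n hb X R Y ψ x‖ ^ 2 = ∫ x, ‖ψ x‖ ^ 2 := by
  rw [UXY_eq_chirpDilation, integral_norm_sq_chirpDilation hR, ← hRR, det_mul, ← sq,
    sq_rpow_one_div_four_sq, mul_inv_cancel₀ (abs_ne_zero.2 hR), one_mul]

lemma exists_memLp_UXY_eq (hRR : R * R = Y) (hR : R.det ≠ 0) {ψ : E n → ℂ}
    (hψ : MemLp ψ 2 volume) : ∃ χ : E n → ℂ, MemLp χ 2 volume ∧ UXY n hb X R Y χ = ψ := by
  have hc : Y.det ^ ((1 : ℝ) / 4) ≠ 0 := by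
    rw [← hRR, det_mul]
    exact (Real.rpow_pos_of_pos (mul_self_pos.2 hR) _).ne'
  have hθ : Continuous fun y : E n =>
      -((X *ᵥ (R⁻¹ *ᵥ fromE n y)) ⬝ᵥ (R⁻¹ *ᵥ fromE n y) / (2 * hb)) := by
    simp only [dotProduct, mulVec, fromE]
    fun_prop
  have hRinv : R⁻¹.det ≠ 0 := by simpa [det_nonsing_inv] using hR
  refine ⟨chirpDilation (Y.det ^ ((1 : ℝ) / 4))⁻¹ _ R⁻¹ ψ,
    memLp_chirpDilation hθ.measurable hRinv hψ, ?_⟩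
  rw [UXY_eq_chirpDilation]
  exact chirpDilation_chirpDilation_inv hc (isUnit_iff_ne_zero.2 hR) ψ

lemma UXY_gauss0 (hhb : 0 < hb) (hRsym : Rᵀ = R) (hRR : R * R = Y) :
    UXY n hb X R Y (gauss0 n hb) = gaussM n hb X Y := by
  funext x
  have hYdet : 0 ≤ Y.det := by rw [← hRR, det_mul]; exact mul_self_nonneg _
  have hquad : ((X.map ((↑) : ℝ → ℂ) + Complex.I • Y.map ((↑) : ℝ → ℂ)) *ᵥ
      (fun i => (x i : ℂ))) ⬝ᵥ (fun i => (x i : ℂ)) =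
        (((X *ᵥ x) ⬝ᵥ x : ℝ) : ℂ) + Complex.I * (((Y *ᵥ x) ⬝ᵥ x : ℝ) : ℂ) := by
    simp only [add_mulVec, smul_mulVec, add_dotProduct, smul_dotProduct, smul_eq_mul,
      map_ofReal_mulVec_dotProduct]
  have hnorm : ‖toE n (R *ᵥ x.ofLp)‖ ^ 2 = (Y *ᵥ x) ⬝ᵥ x := by
    rw [norm_toE_mulVec_sq, hRsym, hRR]
  simp only [UXY, gauss0, gaussM, hquad, hnorm,
    div_pow_rpow hYdet (mul_pos Real.pi_pos hhb), fromE]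
  set q₁ := (X *ᵥ x.ofLp) ⬝ᵥ x.ofLp
  set q₂ := (Y *ᵥ x.ofLp) ⬝ᵥ x.ofLp
  have hexp : Complex.I * (q₁ + Complex.I * q₂) / (2 * hb) =
      Complex.I * (q₁ / (2 * hb) : ℝ) + (-q₂ / (2 * hb) : ℝ) := by
    push_cast
    linear_combination (q₂ / (2 * hb) : ℂ) * Complex.I_sq
  rw [hexp, Complex.exp_add, show -(n : ℝ) / 4 = -(n * (1 / 4)) by ring]
  push_cast
  ring

lemma chirp_phase_covariance (hX : Xᵀ = X) (hRsym : Rᵀ = R) (hR : IsUnit R.det)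
    (x a b : Fin n → ℝ) :
    (X *ᵥ x) ⬝ᵥ x / (2 * hb) + (b ⬝ᵥ (R *ᵥ x) - b ⬝ᵥ a / 2) / hb =
      ((X *ᵥ (R⁻¹ *ᵥ a) + R *ᵥ b) ⬝ᵥ x - (X *ᵥ (R⁻¹ *ᵥ a) + R *ᵥ b) ⬝ᵥ (R⁻¹ *ᵥ a) / 2) / hb +
        (X *ᵥ (x - R⁻¹ *ᵥ a)) ⬝ᵥ (x - R⁻¹ *ᵥ a) / (2 * hb) := by
  have hsymm : (X *ᵥ x) ⬝ᵥ (R⁻¹ *ᵥ a) = (X *ᵥ (R⁻¹ *ᵥ a)) ⬝ᵥ x := mulVec_dotProduct_comm hX _ _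
  have hRx : (R *ᵥ b) ⬝ᵥ x = b ⬝ᵥ (R *ᵥ x) := by
    rw [mulVec_dotProduct_comm hRsym, dotProduct_comm]
  have hRa : (R *ᵥ b) ⬝ᵥ (R⁻¹ *ᵥ a) = b ⬝ᵥ a := by
    rw [mulVec_dotProduct_comm hRsym, mulVec_nonsing_inv_mulVec hR, dotProduct_comm]
  simp only [add_dotProduct, mulVec_sub, sub_dotProduct, dotProduct_sub, hsymm, hRx, hRa]
  ring

lemma UXY_HW (hX : Xᵀ = X) (hRsym : Rᵀ = R) (hR : IsUnit R.det) (ψ : E n → ℂ)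
    (z : E n × E n) :
    UXY n hb X R Y (HW n hb z ψ) = HW n hb (SXY n X R z) (UXY n hb X R Y ψ) := by
  funext x
  obtain ⟨a, b⟩ := z
  have harg : toE n (R *ᵥ fromE n x) - a =
      toE n (R *ᵥ fromE n (x - toE n (R⁻¹ *ᵥ fromE n a))) := by
    change _ = toE n (R *ᵥ (fromE n x - R⁻¹ *ᵥ fromE n a))
    rw [mulVec_sub, mulVec_nonsing_inv_mulVec hR]
    rfl
  simp only [UXY, HW, SXY, harg]
  refine mul_exp_I_mul_eq_of_add_eq ?_ _ _
  simp only [inner_eq_dotProduct, fromE_toE]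
  exact chirp_phase_covariance hX hRsym hR _ _ _

lemma sform_SXY (hX : Xᵀ = X) (hRsym : Rᵀ = R) (hR : IsUnit R.det) (z w : E n × E n) :
    sform n (SXY n X R z) (SXY n X R w) = sform n z w := by
  have key : ∀ v w : Fin n → ℝ, (R *ᵥ v) ⬝ᵥ (R⁻¹ *ᵥ w) = v ⬝ᵥ w := fun v w => by
    rw [mulVec_dotProduct_comm hRsym, mulVec_nonsing_inv_mulVec hR, dotProduct_comm]
  simp only [sform, SXY, inner_eq_dotProduct, fromE_toE, add_dotProduct, key]
  rw [mulVec_dotProduct_comm hX]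
  ring

end UXY

theorem stmt18_general (n : ℕ) (hb : ℝ) (hhb : 0 < hb)
    (X Y R : Matrix (Fin n) (Fin n) ℝ)
    (hX : Xᵀ = X) (hRsym : Rᵀ = R) (hRpd : R.PosDef) (hRR : R * R = Y) :
    ((∀ ψ : E n → ℂ, MemLp ψ 2 volume → MemLp (UXY n hb X R Y ψ) 2 volume ∧
        ∫ x, ‖UXY n hb X R Y ψ x‖ ^ 2 = ∫ x, ‖ψ x‖ ^ 2) ∧
      (∀ ψ : E n → ℂ, MemLp ψ 2 volume →
        ∃ χ : E n → ℂ, MemLp χ 2 volume ∧ UXY n hb X R Y χ = ψ)) ∧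
    UXY n hb X R Y (gauss0 n hb) = gaussM n hb X Y ∧
    ((∀ (ψ : E n → ℂ) (z : E n × E n),
        UXY n hb X R Y (HW n hb z ψ) = HW n hb (SXY n X R z) (UXY n hb X R Y ψ)) ∧
      ∀ z w, sform n (SXY n X R z) (SXY n X R w) = sform n z w) := by
  have hR : R.det ≠ 0 := hRpd.det_pos.ne'
  have hR' : IsUnit R.det := isUnit_iff_ne_zero.2 hR
  exact ⟨⟨fun ψ hψ => ⟨memLp_UXY hR hψ, integral_norm_sq_UXY hRR hR ψ⟩,
      fun _ hψ => exists_memLp_UXY_eq hRR hR hψ⟩,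
    UXY_gauss0 hhb hRsym hRR, UXY_HW hX hRsym hR', sform_SXY hX hRsym hR'⟩

/-- with `M = X + iY` (`X, Y` symmetric, `Y > 0`) and `R = Y^{1/2}`:
(i) `U` is unitary on `L²(ℝⁿ)`; (ii) `U φ₀^ℏ = φ_M^ℏ`; (iii) `U` satisfies the
symplectic covariance relation `U ∘ T^ℏ(z) = T^ℏ(Sz) ∘ U` where
`S = [[Y^{−1/2},0],[XY^{−1/2},Y^{1/2}]]` is symplectic. -/
theorem stmt18 (n : ℕ) (hb : ℝ) (hhb : 0 < hb)
    (X Y R : Matrix (Fin n) (Fin n) ℝ)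
    (hX : Xᵀ = X) (hY : Yᵀ = Y) (hYpd : Y.PosDef)
    (hRsym : Rᵀ = R) (hRpd : R.PosDef) (hRR : R * R = Y) :
    ((∀ ψ : E n → ℂ, MemLp ψ 2 volume → MemLp (UXY n hb X R Y ψ) 2 volume ∧
        ∫ x, ‖UXY n hb X R Y ψ x‖ ^ 2 = ∫ x, ‖ψ x‖ ^ 2) ∧
      (∀ ψ : E n → ℂ, MemLp ψ 2 volume →
        ∃ χ : E n → ℂ, MemLp χ 2 volume ∧ UXY n hb X R Y χ = ψ)) ∧
    UXY n hb X R Y (gauss0 n hb) = gaussM n hb X Y ∧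
    ((∀ (ψ : E n → ℂ) (z : E n × E n),
        UXY n hb X R Y (HW n hb z ψ) = HW n hb (SXY n X R z) (UXY n hb X R Y ψ)) ∧
      ∀ z w, sform n (SXY n X R z) (SXY n X R w) = sform n z w) :=
  stmt18_general n hb hhb X Y R hX hRsym hRpd hRR
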